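/- Let x, y ∈ Z[ω] with gde(x, √2) = gde(y, √2) = 0. If √2 divides both |x|² and |y|², then √2 divides Re(√2·x·y*). -/
import Mathlib


noncomputable section

open Complex

/-- The eighth root of unity ω = e^{iπ/4}. -/
def omg : ℂ := Complex.exp (Real.pi * Complex.I / 4)

/-- √2 as a complex number. -/
def rt2 : ℂ := (Real.sqrt 2 : ℝ)

/-- Membership in the ring Z[ω] = {a + bω + cω² + dω³ : a,b,c,d ∈ ℤ}. -/
def Zomega (z : ℂ) : Prop :=
  ∃ a b c d : ℤ, z = a + b * omg + c * omg ^ 2 + d * omg ^ 3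

/-- Membership in the ring Z[1/√2, i] = {u/(√2)^n : u ∈ Z[ω], n ∈ ℕ}. -/
def ZRoot2i (z : ℂ) : Prop :=
  ∃ u : ℂ, Zomega u ∧ ∃ n : ℕ, z = u / rt2 ^ n

/-- `b` divides `z` within the ring Z[ω]. -/
def ZDvd (b z : ℂ) : Prop := ∃ q : ℂ, Zomega q ∧ z = b * q

/-- `k` is the greatest dividing exponent of base `b` with respect to `z`:
`b^k` divides `z` in Z[ω], while `b^(k+1)` does not. -/
def IsGde (b z : ℂ) (k : ℕ) : Prop := ZDvd (b ^ k) z ∧ ¬ ZDvd (b ^ (k + 1)) z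

/-- `k` is the smallest denominator exponent of base √2 with respect to `z`:
the smallest integer `k` such that `z·(√2)^k ∈ Z[ω]`. -/
def IsSde (z : ℂ) (k : ℤ) : Prop :=
  Zomega (z * rt2 ^ k) ∧ ∀ j : ℤ, Zomega (z * rt2 ^ j) → k ≤ j



lemma homg : omg = ((Real.sqrt 2 : ℝ) : ℂ) / 2 * (1 + I) := by
  have h : (Real.pi : ℂ) * I / 4 = ((Real.pi / 4 : ℝ) : ℂ) * I := by push_cast; ring
  rw [omg, h, Complex.exp_mul_I, ← Complex.ofReal_cos, ← Complex.ofReal_sin,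
    Real.cos_pi_div_four, Real.sin_pi_div_four]
  push_cast
  ring

lemma ht2 : ((Real.sqrt 2 : ℝ) : ℂ) ^ 2 = 2 := by
  norm_cast
  rw [Real.sq_sqrt]; norm_num

lemma hw2 : omg ^ 2 = I := by
  rw [homg]
  linear_combination (Complex.I / 2) * ht2 + (((Real.sqrt 2 : ℝ) : ℂ) ^ 2 / 4) * Complex.I_sq

lemma h4 : omg ^ 4 = -1 := by
  rw [show omg ^ 4 = (omg ^ 2) ^ 2 by ring, hw2, Complex.I_sq]

lemma hr : rt2 = omg - omg ^ 3 := by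
  rw [rt2, homg]
  linear_combination ((Complex.I - 1) * ((Real.sqrt 2 : ℝ) : ℂ) / 4) * ht2
    + (3 * ((Real.sqrt 2 : ℝ) : ℂ) ^ 3 / 8 + ((Real.sqrt 2 : ℝ) : ℂ) ^ 3 * Complex.I / 8) * Complex.I_sq

lemma omg_ne : omg ≠ 0 := by
  rw [omg]; exact Complex.exp_ne_zero _

lemma hconj : (starRingEnd ℂ) omg = -omg ^ 3 := by
  have h1 : (starRingEnd ℂ) omg * omg = 1 := by
    rw [omg, ← Complex.exp_conj, ← Complex.exp_add]
    rw [show (starRingEnd ℂ) (Real.pi * I / 4) + Real.pi * I / 4 = 0 by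
      simp [map_div₀, map_mul, map_ofNat, Complex.conj_ofReal, Complex.conj_I]; ring]
    exact Complex.exp_zero
  have h2 : (-omg ^ 3) * omg = 1 := by linear_combination -h4
  exact mul_right_cancel₀ omg_ne (h1.trans h2.symm)


/-- conjugation in coordinates -/
lemma L2 (a b c d : ℤ) :
    (starRingEnd ℂ) ((a : ℂ) + b * omg + c * omg ^ 2 + d * omg ^ 3)
      = (a : ℂ) - d * omg - c * omg ^ 2 - b * omg ^ 3 := by
  simp only [map_add, map_mul, map_pow, hconj, map_intCast]
  linear_combination ((c : ℂ) * omg ^ 2 + d * omg - d * omg ^ 5) * h4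

/-- multiplication by rt2 in coordinates -/
lemma L1 (e f g h : ℂ) :
    rt2 * (e + f * omg + g * omg ^ 2 + h * omg ^ 3)
      = (f - h) + (e + g) * omg + (f + h) * omg ^ 2 + (g - e) * omg ^ 3 := by
  rw [hr]
  linear_combination ((h - f) - g * omg - h * omg ^ 2) * h4

/-- general multiplication in coordinates -/
lemma L5 (a b c d e f g h : ℂ) :
    (a + b * omg + c * omg ^ 2 + d * omg ^ 3) * (e + f * omg + g * omg ^ 2 + h * omg ^ 3)
      = (a * e - b * h - c * g - d * f) + (a * f + b * e - c * h - d * g) * omg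
        + (a * g + b * f + c * e - d * h) * omg ^ 2
        + (a * h + b * g + c * f + d * e) * omg ^ 3 := by
  linear_combination ((b * h + c * g + d * f) + (c * h + d * g) * omg + d * h * omg ^ 2) * h4

/-- rational independence of 1 and √2 -/
lemma K (p q : ℚ) (h : (p : ℝ) + q * Real.sqrt 2 = 0) : p = 0 ∧ q = 0 := by
  by_cases hq : q = 0
  · subst hq; simp at h; exact ⟨by exact_mod_cast h, rfl⟩
  · exfalso
    apply irrational_sqrt_two
    refine ⟨-p / q, ?_⟩
    have hq' : (q : ℝ) ≠ 0 := by exact_mod_cast hq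
    push_cast
    field_simp
    linarith [h]

/-- uniqueness of coordinates -/
lemma coords_unique (p q r s : ℤ)
    (h : (p : ℂ) + q * omg + r * omg ^ 2 + s * omg ^ 3 = 0) :
    p = 0 ∧ q = 0 ∧ r = 0 ∧ s = 0 := by
  have h3 : omg ^ 3 = ((Real.sqrt 2 : ℝ) : ℂ) / 2 * (I - 1) := by
    rw [show omg ^ 3 = omg ^ 2 * omg by ring, hw2, homg]
    linear_combination (((Real.sqrt 2 : ℝ) : ℂ) / 2) * Complex.I_sq
  rw [hw2, h3, homg] at h
  have h' : (2 * p : ℂ) + (q : ℂ) * (Real.sqrt 2 : ℝ) * (1 + I)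
      + (2 * r : ℂ) * I + (s : ℂ) * (Real.sqrt 2 : ℝ) * (I - 1) = 0 := by
    linear_combination 2 * h
  have hre := congrArg Complex.re h'
  have him := congrArg Complex.im h'
  simp [Complex.mul_re, Complex.mul_im] at hre him
  have k1 := K (2 * p) (q - s) (by push_cast; nlinarith [hre])
  have k2 := K (2 * r) (q + s) (by push_cast; nlinarith [him])
  have e1 : 2 * p = 0 := by exact_mod_cast k1.1
  have e2 : q - s = 0 := by exact_mod_cast k1.2
  have e3 : 2 * r = 0 := by exact_mod_cast k2.1
  have e4 : q + s = 0 := by exact_mod_cast k2.2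
  refine ⟨by omega, by omega, by omega, by omega⟩

lemma L6 (A B C D k : ℤ) (hk : B - D = 2 * k) :
    ((((A : ℂ) + B * omg + C * omg ^ 2 + D * omg ^ 3).re : ℝ) : ℂ)
      = (A : ℂ) + k * omg - k * omg ^ 3 := by
  have hz := Complex.add_conj ((A : ℂ) + B * omg + C * omg ^ 2 + D * omg ^ 3)
  rw [L2] at hz
  have hk' : (B : ℂ) - (D : ℂ) = 2 * (k : ℂ) := by exact_mod_cast hk
  push_cast at hz
  linear_combination (-1/2 : ℂ) * hz + ((omg - omg ^ 3) / 2) * hk'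

lemma par1 : ∀ a b c d : ZMod 2,
    a*a + b*b + c*c + d*d = 0 → ¬(a = c ∧ b = d) → a + c = 1 ∧ b + d = 1 := by decide

lemma par (a b c d e f g h : ZMod 2)
    (h1 : a*a + b*b + c*c + d*d = 0) (h2 : e*e + f*f + g*g + h*h = 0)
    (h3 : ¬(a = c ∧ b = d)) (h4 : ¬(e = g ∧ f = h)) :
    (-a*h + b*e + c*f + d*g) - (-a*f - b*g - c*h + d*e) = 0 := by
  obtain ⟨u1, u2⟩ := par1 a b c d h1 h3
  obtain ⟨v1, v2⟩ := par1 e f g h h2 h4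
  calc (-a*h + b*e + c*f + d*g) - (-a*f - b*g - c*h + d*e)
      = (a+c)*(f+h) + (b+d)*(e+g) + 2*(-(a*h) - d*e) := by ring
    _ = 1*1 + 1*1 + 2*(-(a*h) - d*e) := by rw [u1, u2, v1, v2]
    _ = 2*(1 + -(a*h) - d*e) := by ring
    _ = 0 := by rw [show (2 : ZMod 2) = 0 by decide]; ring

/-- if coordinates are congruent appropriately mod 2, then rt2 divides -/
lemma evenDvd (z : ℂ) (a b c d : ℤ) (hz : z = (a : ℂ) + b * omg + c * omg ^ 2 + d * omg ^ 3)
    (h1 : ((a : ZMod 2) = (c : ZMod 2))) (h2 : ((b : ZMod 2) = (d : ZMod 2))) :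
    ZDvd rt2 z := by
  have d1 : (2 : ℤ) ∣ (a - c) := by
    have : ((a - c : ℤ) : ZMod 2) = 0 := by push_cast; rw [h1]; ring
    exact (ZMod.intCast_zmod_eq_zero_iff_dvd _ 2).mp this
  have d2 : (2 : ℤ) ∣ (b - d) := by
    have : ((b - d : ℤ) : ZMod 2) = 0 := by push_cast; rw [h2]; ring
    exact (ZMod.intCast_zmod_eq_zero_iff_dvd _ 2).mp this
  obtain ⟨k1, hk1⟩ := d1
  obtain ⟨k2, hk2⟩ := d2
  refine ⟨(k2 : ℂ) + ((c : ℂ) + k1) * omg + ((d : ℂ) + k2) * omg ^ 2 + (-(k1 : ℂ)) * omg ^ 3,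
    ⟨k2, c + k1, d + k2, -k1, by push_cast; ring⟩, ?_⟩
  rw [hz, L1]
  have ha' : (a : ℂ) = c + 2 * k1 := by exact_mod_cast (by omega : a = c + 2 * k1)
  have hb' : (b : ℂ) = d + 2 * k2 := by exact_mod_cast (by omega : b = d + 2 * k2)
  linear_combination ha' + omg * hb'

/-- extracting parity from divisibility of the norm -/
lemma normEven (z : ℂ) (a b c d : ℤ) (hz : z = (a : ℂ) + b * omg + c * omg ^ 2 + d * omg ^ 3)
    (hd : ZDvd rt2 (z * (starRingEnd ℂ) z)) :
    ((a : ZMod 2) * a + b * b + c * c + d * d = 0) := by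
  obtain ⟨q1, ⟨e1, f1, g1, h1, hq1⟩, heq⟩ := hd
  have hcz : (starRingEnd ℂ) z = (a : ℂ) - d * omg - c * omg ^ 2 - b * omg ^ 3 := by
    rw [hz]; exact L2 a b c d
  have hmx : z * (starRingEnd ℂ) z
      = ((a*a + b*b + c*c + d*d : ℤ) : ℂ) + ((a*b + b*c + c*d - d*a : ℤ) : ℂ) * omg
        + ((0 : ℤ) : ℂ) * omg ^ 2 + ((-(a*b + b*c + c*d - d*a) : ℤ) : ℂ) * omg ^ 3 := by
    rw [hcz, hz]
    push_cast
    linear_combination L5 (a : ℂ) b c d (a : ℂ) (-(d:ℂ)) (-(c:ℂ)) (-(b:ℂ))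
  have heq' : z * (starRingEnd ℂ) z
      = ((f1 - h1 : ℤ) : ℂ) + ((e1 + g1 : ℤ) : ℂ) * omg + ((f1 + h1 : ℤ) : ℂ) * omg ^ 2
        + ((g1 - e1 : ℤ) : ℂ) * omg ^ 3 := by
    rw [heq, hq1, L1]; push_cast; ring
  have key := coords_unique ((a*a + b*b + c*c + d*d) - (f1 - h1))
      ((a*b + b*c + c*d - d*a) - (e1 + g1)) (0 - (f1 + h1))
      ((-(a*b + b*c + c*d - d*a)) - (g1 - e1))
      (by push_cast at hmx heq' ⊢; linear_combination heq' - hmx)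
  have hN : a*a + b*b + c*c + d*d = 2 * f1 := by omega
  have : ((a*a + b*b + c*c + d*d : ℤ) : ZMod 2) = ((2 * f1 : ℤ) : ZMod 2) := by rw [hN]
  push_cast at this
  rw [this, show (2 : ZMod 2) = 0 by decide]; ring

/-- If gde(x, √2) = gde(y, √2) = 0 and √2 divides both |x|² and |y|², then
√2 divides Re(√2·x·y*), which lies in Z[ω]. -/
theorem stmt18 (x y : ℂ) (hx : Zomega x) (hy : Zomega y)
    (hndx : ¬ ZDvd rt2 x) (hndy : ¬ ZDvd rt2 y)
    (hdx : ZDvd rt2 (x * (starRingEnd ℂ) x))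
    (hdy : ZDvd rt2 (y * (starRingEnd ℂ) y)) :
    Zomega (((rt2 * x * (starRingEnd ℂ) y).re : ℝ) : ℂ) ∧
      ZDvd rt2 (((rt2 * x * (starRingEnd ℂ) y).re : ℝ) : ℂ) := by
  obtain ⟨a, b, c, d, hxe⟩ := hx
  obtain ⟨e, f, g, h, hye⟩ := hy
  have hcy : (starRingEnd ℂ) y = (e : ℂ) - f * omg ^ 3 - g * omg ^ 2 - h * omg := by
    rw [hye, L2]; ring
  have hm : x * (starRingEnd ℂ) y
      = ((a*e + b*f + c*g + d*h : ℤ) : ℂ)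
        + ((-a*h + b*e + c*f + d*g : ℤ) : ℂ) * omg
        + ((-a*g - b*h + c*e + d*f : ℤ) : ℂ) * omg ^ 2
        + ((-a*f - b*g - c*h + d*e : ℤ) : ℂ) * omg ^ 3 := by
    rw [hxe, hcy]
    push_cast
    linear_combination L5 (a : ℂ) b c d (e : ℂ) (-(h:ℂ)) (-(g:ℂ)) (-(f:ℂ))
  have hw : rt2 * x * (starRingEnd ℂ) y
      = (((-a*h + b*e + c*f + d*g) - (-a*f - b*g - c*h + d*e) : ℤ) : ℂ)
        + (((a*e + b*f + c*g + d*h) + (-a*g - b*h + c*e + d*f) : ℤ) : ℂ) * omg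
        + (((-a*h + b*e + c*f + d*g) + (-a*f - b*g - c*h + d*e) : ℤ) : ℂ) * omg ^ 2
        + (((-a*g - b*h + c*e + d*f) - (a*e + b*f + c*g + d*h) : ℤ) : ℂ) * omg ^ 3 := by
    rw [mul_assoc, hm, L1]; push_cast; ring
  rw [hw]
  rw [L6 _ _ _ _ (a*e + b*f + c*g + d*h) (by ring)]
  constructor
  · exact ⟨(-a*h + b*e + c*f + d*g) - (-a*f - b*g - c*h + d*e),
      a*e + b*f + c*g + d*h, 0, -(a*e + b*f + c*g + d*h), by push_cast; ring⟩
  · -- parity argument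
    have h1z := normEven x a b c d hxe hdx
    have h2z := normEven y e f g h hye hdy
    have hpx : ¬(((a : ZMod 2) = (c : ZMod 2)) ∧ ((b : ZMod 2) = (d : ZMod 2))) := by
      rintro ⟨u1, u2⟩; exact hndx (evenDvd x a b c d hxe u1 u2)
    have hpy : ¬(((e : ZMod 2) = (g : ZMod 2)) ∧ ((f : ZMod 2) = (h : ZMod 2))) := by
      rintro ⟨u1, u2⟩; exact hndy (evenDvd y e f g h hye u1 u2)
    have hpar := par (a : ZMod 2) b c d e f g h h1z h2z hpx hpy
    have hdvd : (2 : ℤ) ∣ ((-a*h + b*e + c*f + d*g) - (-a*f - b*g - c*h + d*e)) := by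
      apply (ZMod.intCast_zmod_eq_zero_iff_dvd _ 2).mp
      push_cast
      linear_combination hpar
    obtain ⟨n, hn⟩ := hdvd
    refine ⟨((a*e + b*f + c*g + d*h : ℤ) : ℂ) + (n : ℂ) * omg + ((0:ℤ) : ℂ) * omg ^ 2
        + (-(n : ℂ)) * omg ^ 3, ⟨a*e + b*f + c*g + d*h, n, 0, -n, by push_cast; ring⟩, ?_⟩
    rw [L1]
    have hn' : (((-a*h + b*e + c*f + d*g) - (-a*f - b*g - c*h + d*e) : ℤ) : ℂ) = 2 * (n : ℂ) := by
      exact_mod_cast hn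
    push_cast at hn' ⊢
    linear_combination hn'
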